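/- arXiv:1304.2946 — 5 statements merged into one kernel-verified Lean document; each statement's English description precedes it below -/
import Mathlib

section
/- Let n = 2m. For any integers j with 0 ≤ j ≤ 2^m - 2 and k with 1 ≤ k ≤ 2^m, we have wt_n((2^m+1)(2^m-1-j) + (2^m-1)k) = n - wt_n((2^m+1)j + (2^m-1)k). -/
/-!
Put `A = 2^m`, `N = 2^(2m) - 1 = (A + 1)(A - 1)`, `u = (A + 1) j + (A - 1) k` and
`v = (A + 1)(A - 1 - j) + (A - 1) k`. Modulo `N`, doubling a residue rotates its `2m` binary digits
cyclically, and `N - r` is the digitwise complement of `r`. Hence `wt` is invariant under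
multiplication by powers of `2`, and `wt (-u) = 2m - wt u` whenever `N ∤ u`. As `A v ≡ -u (mod N)`,
it remains to see `N ∤ u`: otherwise `A + 1 ∣ 2k` with `0 < 2k < 2(A + 1)`, so `2k = A + 1`,
which is odd.
-/

/-- `wt n u`: the number of 1's in the binary expansion of the reduction of the
integer `u` modulo `2^n - 1`, taken in the residue system `{0, 1, ..., 2^n - 2}`. -/
def wt (n : ℕ) (u : ℤ) : ℕ :=
  (Nat.digits 2 ((u % ((2:ℤ)^n - 1)).toNat)).count 1

def binaryWeight (x : ℕ) : ℕ := (Nat.digits 2 x).count 1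

theorem binaryWeight_of_lt_two {b : ℕ} (hb : b < 2) : binaryWeight b = b := by
  interval_cases b <;> rfl

theorem binaryWeight_add_two_pow_mul {k c : ℕ} (hc : c < 2 ^ k) (a : ℕ) :
    binaryWeight (c + 2 ^ k * a) = binaryWeight c + binaryWeight a := by
  rcases Nat.eq_zero_or_pos a with rfl | ha
  · simp [binaryWeight]
  have hlen : (Nat.digits 2 c).length ≤ k := (Nat.digits_length_le_iff one_lt_two c).mpr hc
  have hdigits := Nat.digits_append_zeroes_append_digits (k := k - (Nat.digits 2 c).length)
    (n := c) one_lt_two ha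
  rw [Nat.add_sub_cancel' hlen] at hdigits
  simp [binaryWeight, ← hdigits, List.count_replicate]

theorem binaryWeight_eq_mod_two_add (x : ℕ) : binaryWeight x = x % 2 + binaryWeight (x / 2) := by
  have h := binaryWeight_add_two_pow_mul (k := 1) (Nat.mod_lt x two_pos) (x / 2)
  rwa [pow_one, Nat.mod_add_div, binaryWeight_of_lt_two (Nat.mod_lt x two_pos)] at h

theorem binaryWeight_add_binaryWeight_two_pow_sub_one_sub {n r : ℕ} (hr : r < 2 ^ n) :
    binaryWeight r + binaryWeight (2 ^ n - 1 - r) = n := by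
  induction n generalizing r with
  | zero =>
    obtain rfl : r = 0 := by omega
    rfl
  | succ n ih =>
    have hhalf : (2 ^ (n + 1) - 1 - r) / 2 = 2 ^ n - 1 - r / 2 := by rw [pow_succ]; omega
    have hpar : (2 ^ (n + 1) - 1 - r) % 2 = 1 - r % 2 := by rw [pow_succ]; omega
    rw [binaryWeight_eq_mod_two_add r, binaryWeight_eq_mod_two_add (2 ^ (n + 1) - 1 - r), hhalf,
      hpar]
    have := ih (r := r / 2) (by rw [pow_succ] at hr; omega)
    omega

theorem binaryWeight_two_mul_mod_two_pow_sub_one {n r : ℕ} (hn : 0 < n) (hr : r < 2 ^ n - 1) :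
    binaryWeight (2 * r % (2 ^ n - 1)) = binaryWeight r := by
  obtain ⟨n, rfl⟩ := Nat.exists_eq_add_one_of_ne_zero hn.ne'
  rw [pow_succ] at hr ⊢
  rcases lt_or_ge r (2 ^ n) with hlow | hhigh
  · rw [Nat.mod_eq_of_lt (by omega), binaryWeight_eq_mod_two_add (2 * r)]
    simp
  · obtain ⟨c, rfl⟩ := Nat.exists_eq_add_of_le hhigh
    have hrot : 2 * (2 ^ n + c) % (2 ^ n * 2 - 1) = 1 + 2 ^ 1 * c := by
      rw [show 2 * (2 ^ n + c) = (1 + 2 ^ 1 * c) + (2 ^ n * 2 - 1) by omega, Nat.add_mod_right,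
        Nat.mod_eq_of_lt (by omega)]
    have hc : c < 2 ^ n := by omega
    rw [hrot, binaryWeight_add_two_pow_mul one_lt_two, add_comm (2 ^ n), ← mul_one (2 ^ n),
      binaryWeight_add_two_pow_mul hc, add_comm]

theorem natCast_two_pow_sub_one (n : ℕ) : ((2 ^ n - 1 : ℕ) : ℤ) = 2 ^ n - 1 := by
  push_cast [Nat.one_le_two_pow]
  ring

theorem wt_congr {n : ℕ} {u v : ℤ} (h : u ≡ v [ZMOD 2 ^ n - 1]) : wt n u = wt n v := by
  rw [wt, wt, h]

theorem wt_natCast (n r : ℕ) : wt n r = binaryWeight (r % (2 ^ n - 1)) := by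
  rw [wt, ← natCast_two_pow_sub_one, ← Int.natCast_mod, Int.toNat_natCast, binaryWeight]

theorem exists_modEq_natCast_lt {n : ℕ} (hn : 0 < n) (u : ℤ) :
    ∃ r : ℕ, r < 2 ^ n - 1 ∧ u ≡ r [ZMOD 2 ^ n - 1] := by
  have hN : (0 : ℤ) < 2 ^ n - 1 := by
    rw [← natCast_two_pow_sub_one]
    exact_mod_cast Nat.sub_pos_of_lt (Nat.one_lt_two_pow hn.ne')
  refine ⟨(u % (2 ^ n - 1)).toNat, ?_, ?_⟩
  · rw [← Int.ofNat_lt, Int.toNat_of_nonneg (Int.emod_nonneg _ hN.ne'), natCast_two_pow_sub_one]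
    exact Int.emod_lt_of_pos _ hN
  · rw [Int.toNat_of_nonneg (Int.emod_nonneg _ hN.ne')]
    exact (Int.mod_modEq _ _).symm

theorem wt_two_mul {n : ℕ} (hn : 0 < n) (u : ℤ) : wt n (2 * u) = wt n u := by
  obtain ⟨r, hr, hur⟩ := exists_modEq_natCast_lt hn u
  rw [wt_congr hur, wt_congr (hur.mul_left 2), ← Nat.cast_ofNat, ← Nat.cast_mul, wt_natCast,
    wt_natCast, binaryWeight_two_mul_mod_two_pow_sub_one hn hr, Nat.mod_eq_of_lt hr]

theorem wt_two_pow_mul {n : ℕ} (hn : 0 < n) (i : ℕ) (u : ℤ) : wt n (2 ^ i * u) = wt n u := by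
  induction i with
  | zero => rw [pow_zero, one_mul]
  | succ i ih => rw [pow_succ', mul_assoc, wt_two_mul hn, ih]

theorem wt_neg {n : ℕ} (hn : 0 < n) {u : ℤ} (hu : ¬ (2 ^ n - 1 : ℤ) ∣ u) :
    wt n (-u) = n - wt n u := by
  obtain ⟨r, hr, hur⟩ := exists_modEq_natCast_lt hn u
  have hr0 : r ≠ 0 := by
    rintro rfl
    exact hu (Int.modEq_zero_iff_dvd.mp hur)
  have hneg : -u ≡ ((2 ^ n - 1 - r : ℕ) : ℤ) [ZMOD 2 ^ n - 1] := by
    rw [Nat.cast_sub hr.le, natCast_two_pow_sub_one]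
    exact hur.neg.trans (Int.modEq_iff_dvd.mpr ⟨1, by ring⟩)
  have hcompl := binaryWeight_add_binaryWeight_two_pow_sub_one_sub (n := n) (r := r) (by omega)
  rw [wt_congr hneg, wt_congr hur, wt_natCast, wt_natCast, Nat.mod_eq_of_lt hr,
    Nat.mod_eq_of_lt (by omega)]
  omega

theorem not_add_one_dvd_add_one_mul_add_sub_one_mul {A j k : ℤ} (hA : Even A) (hk0 : 1 ≤ k)
    (hk1 : k ≤ A) : ¬ (A + 1) ∣ (A + 1) * j + (A - 1) * k := by
  intro h
  have h2k : (A + 1) ∣ 2 * k := by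
    have h' := (Dvd.intro (j + k) rfl).sub h
    rwa [show (A + 1) * (j + k) - ((A + 1) * j + (A - 1) * k) = 2 * k by ring] at h'
  obtain ⟨c, hc⟩ := h2k
  obtain rfl : c = 1 := by nlinarith
  obtain ⟨a, rfl⟩ := hA
  omega

theorem stmt_1_general (m : ℕ) (hm : 0 < m) (j k : ℤ)
    (hk0 : 1 ≤ k) (hk1 : k ≤ 2^m) :
    wt (2*m) ((2^m + 1) * (2^m - 1 - j) + (2^m - 1) * k)
      = 2*m - wt (2*m) ((2^m + 1) * j + (2^m - 1) * k) := by
  have hN : (2 : ℤ) ^ (2 * m) - 1 = (2 ^ m + 1) * (2 ^ m - 1) := by ring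
  have hu : ¬ (2 : ℤ) ^ (2 * m) - 1 ∣ (2 ^ m + 1) * j + (2 ^ m - 1) * k := fun h =>
    not_add_one_dvd_add_one_mul_add_sub_one_mul ((Int.even_pow' hm.ne').mpr even_two) hk0 hk1
      ((Dvd.intro _ hN.symm).trans h)
  have hrot : (2 : ℤ) ^ m * ((2 ^ m + 1) * (2 ^ m - 1 - j) + (2 ^ m - 1) * k)
      ≡ -((2 ^ m + 1) * j + (2 ^ m - 1) * k) [ZMOD 2 ^ (2 * m) - 1] :=
    Int.modEq_iff_dvd.mpr ⟨-(2 ^ m - j + k), by rw [hN]; ring⟩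
  rw [← wt_two_pow_mul (by omega) m, wt_congr hrot, wt_neg (by omega) hu]

theorem stmt_1 (m : ℕ) (hm : 0 < m) (j k : ℤ)
    (hj0 : 0 ≤ j) (hj1 : j ≤ 2^m - 2) (hk0 : 1 ≤ k) (hk1 : k ≤ 2^m) :
    wt (2*m) ((2^m + 1) * (2^m - 1 - j) + (2^m - 1) * k)
      = 2*m - wt (2*m) ((2^m + 1) * j + (2^m - 1) * k) :=
  stmt_1_general m hm j k hk0 hk1
end

section
/- Let n = 2m. For any integer k with 1 ≤ k ≤ 2^m, wt_n((2^m - 1)k) = m. -/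
def bitWeight (x : ℕ) : ℕ :=
  (Nat.digits 2 x).count 1

lemma bitWeight_two_mul_add (x : ℕ) {r : ℕ} (hr : r < 2) :
    bitWeight (2 * x + r) = bitWeight x + r := by
  rcases Nat.eq_zero_or_pos (2 * x + r) with h | h
  · obtain ⟨rfl, rfl⟩ : x = 0 ∧ r = 0 := by omega
    rfl
  · rw [bitWeight, Nat.digits_def' one_lt_two h,
      show (2 * x + r) % 2 = r by omega, show (2 * x + r) / 2 = x by omega, List.count_cons]
    interval_cases r <;> simp [bitWeight]

lemma bitWeight_add_two_pow_mul {m n : ℕ} (a : ℕ) (hn : n < 2 ^ m) :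
    bitWeight (n + 2 ^ m * a) = bitWeight n + bitWeight a := by
  induction m generalizing n with
  | zero =>
    obtain rfl : n = 0 := by omega
    simp [bitWeight]
  | succ m ih =>
    obtain ⟨q, r, hr, rfl⟩ : ∃ q r, r < 2 ∧ n = 2 * q + r := ⟨n / 2, n % 2, by omega, by omega⟩
    have hq : q < 2 ^ m := by omega
    rw [show 2 * q + r + 2 ^ (m + 1) * a = 2 * (q + 2 ^ m * a) + r by rw [pow_succ]; ring,
      bitWeight_two_mul_add _ hr, bitWeight_two_mul_add _ hr, ih hq]
    omega

lemma bitWeight_add_bitWeight_complement {m a : ℕ} (ha : a < 2 ^ m) :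
    bitWeight a + bitWeight (2 ^ m - 1 - a) = m := by
  induction m generalizing a with
  | zero =>
    obtain rfl : a = 0 := by omega
    rfl
  | succ m ih =>
    obtain ⟨b, r, hr, rfl⟩ : ∃ b r, r < 2 ∧ a = 2 * b + r := ⟨a / 2, a % 2, by omega, by omega⟩
    have hb : b < 2 ^ m := by omega
    rw [show 2 ^ (m + 1) - 1 - (2 * b + r) = 2 * (2 ^ m - 1 - b) + (1 - r) by rw [pow_succ]; omega,
      bitWeight_two_mul_add _ hr, bitWeight_two_mul_add _ (by omega)]
    have := ih hb
    omega

lemma bitWeight_two_pow_sub_one_mul_succ {m a : ℕ} (ha : a < 2 ^ m) :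
    bitWeight ((2 ^ m - 1) * (a + 1)) = m := by
  have hsplit : (2 ^ m - 1) * (a + 1) = (2 ^ m - 1 - a) + 2 ^ m * a := by
    zify [Nat.one_le_two_pow, show a ≤ 2 ^ m - 1 by omega]
    ring
  rw [hsplit, bitWeight_add_two_pow_mul _ (by omega), add_comm,
    bitWeight_add_bitWeight_complement ha]

lemma wt_natCast_of_lt {n x : ℕ} (hx : x < 2 ^ n - 1) : wt n x = bitWeight x := by
  have hx' : (x : ℤ) < 2 ^ n - 1 := by
    zify [Nat.one_le_two_pow] at hx
    exact hx
  rw [wt, Int.emod_eq_of_lt (Int.natCast_nonneg x) hx', Int.toNat_natCast, bitWeight]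

theorem stmt_3 (m : ℕ) (hm : 0 < m) (k : ℤ) (hk0 : 1 ≤ k) (hk1 : k ≤ 2^m) :
    wt (2*m) ((2^m - 1) * k) = m := by
  obtain ⟨a, rfl⟩ : ∃ a : ℕ, k = a + 1 := ⟨(k - 1).toNat, by omega⟩
  have ha : a < 2 ^ m := by exact_mod_cast (show (a : ℤ) < 2 ^ m by omega)
  have hcast : ((2 : ℤ) ^ m - 1) * (a + 1) = ((2 ^ m - 1) * (a + 1) : ℕ) := by
    push_cast [Nat.one_le_two_pow]
    ring
  have htwo : 2 ≤ 2 ^ m := Nat.le_self_pow hm.ne' 2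
  have hreduced : (2 ^ m - 1) * (a + 1) < 2 ^ (2 * m) - 1 := by
    rw [two_mul, pow_add]
    zify [Nat.one_le_two_pow, Nat.one_le_two_pow.trans (Nat.le_mul_self (2 ^ m))] at ha htwo ⊢
    nlinarith
  rw [hcast, wt_natCast_of_lt hreduced, bitWeight_two_pow_sub_one_mul_succ ha]
end

section
/- Let n = 2m. The number of residues j in Z/(2^m - 1)Z such that wt_n((2^m + 1)j) < m equals 2^{m-1} if m is odd, and equals 2^{m-1} - (1/2)·C(m, m/2) if m is even. (Here wt_n((2^m+1)j) = 2·wt_m(j).) -/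
open Finset

namespace Finset.Nat

lemma count_one_digits_two_eq_card_equivBitIndices (n : ℕ) :
    (Nat.digits 2 n).count 1 = #(equivBitIndices n) := by
  rw [equivBitIndices_apply, List.toFinset_card_of_nodup Nat.bitIndices_nodup]
  induction n using Nat.binaryRec' with
  | zero => simp
  | bit b n hbit ih =>
    cases b
    · have hn : n ≠ 0 := fun h => Bool.false_ne_true (hbit h)
      rw [Nat.bit_false]
      dsimp only
      rw [← zero_add (2 * n), Nat.digits_add 2 one_lt_two 0 n (by norm_num) (.inr hn), zero_add,
        Nat.bitIndices_two_mul]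
      simp [ih]
    · rw [Nat.bit_true]
      dsimp only
      rw [add_comm, Nat.digits_add 2 one_lt_two 1 n (by norm_num) (.inl one_ne_zero), add_comm,
        Nat.bitIndices_two_mul_add_one]
      simp [ih]

lemma lt_two_pow_iff_equivBitIndices_subset {n m : ℕ} :
    n < 2 ^ m ↔ equivBitIndices n ⊆ range m := by
  constructor
  · intro h i hi
    have := Nat.two_pow_le_of_mem_bitIndices (List.mem_toFinset.mp hi)
    exact mem_range.mpr ((Nat.pow_lt_pow_iff_right (by norm_num : 1 < 2)).mp (by omega))
  · intro h
    rw [← equivBitIndices.symm_apply_apply n, equivBitIndices_symm_apply]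
    exact Nat.geomSum_lt le_rfl fun i hi => mem_range.mp (h hi)

lemma equivBitIndices_two_pow_sub_one (m : ℕ) : equivBitIndices (2 ^ m - 1) = range m := by
  have hsum : ∑ i ∈ range m, 2 ^ i = 2 ^ m - 1 := by simpa using Nat.geomSum_eq le_rfl m
  rw [← hsum, equivBitIndices_apply, toFinset_bitIndices_sum_two_pow]

lemma card_equivBitIndices_add_two_pow_mul {a m : ℕ} (ha : a < 2 ^ m) (b : ℕ) :
    #(equivBitIndices (a + 2 ^ m * b)) = #(equivBitIndices a) + #(equivBitIndices b) := by
  set A := equivBitIndices a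
  set B := (equivBitIndices b).map (addLeftEmbedding m)
  have hdisj : Disjoint A B := by
    rw [disjoint_left]
    intro i hiA hiB
    have := mem_range.mp (lt_two_pow_iff_equivBitIndices_subset.mp ha hiA)
    obtain ⟨k, -, rfl⟩ := mem_map.mp hiB
    simp at this
  have hsum : a + 2 ^ m * b = ∑ i ∈ A ∪ B, 2 ^ i := by
    rw [sum_union hdisj, sum_map]
    simp only [A, addLeftEmbedding_apply, pow_add, ← mul_sum, equivBitIndices_apply,
      sum_toFinset_bitIndices_two_pow]
  rw [hsum, equivBitIndices_apply, toFinset_bitIndices_sum_two_pow, card_union_of_disjoint hdisj,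
    card_map]

lemma card_filter_range_two_pow (m : ℕ) (p : Finset ℕ → Prop) [DecidablePred p] :
    #{j ∈ range (2 ^ m) | p (equivBitIndices j)} = #{s ∈ (range m).powerset | p s} := by
  refine card_bij' (fun j _ => equivBitIndices j) (fun s _ => equivBitIndices.symm s)
    (fun j hj => ?_) (fun s hs => ?_) (fun j _ => equivBitIndices.symm_apply_apply j)
    (fun s _ => equivBitIndices.apply_symm_apply s)
  · rw [mem_filter, mem_range] at hj
    rw [mem_filter, mem_powerset, ← lt_two_pow_iff_equivBitIndices_subset]
    exact hj
  · rw [mem_filter, mem_powerset] at hs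
    rw [mem_filter, mem_range, lt_two_pow_iff_equivBitIndices_subset, Equiv.apply_symm_apply]
    exact hs

end Finset.Nat

namespace Finset

lemma card_filter_powerset_two_mul_card_eq {α : Type*} (S : Finset α) :
    #{s ∈ S.powerset | 2 * #s = #S} = if Odd #S then 0 else (#S).choose (#S / 2) := by
  split_ifs with hodd
  · rw [card_eq_zero, filter_eq_empty_iff]
    obtain ⟨k, hk⟩ := hodd
    omega
  · rw [← card_powersetCard, powersetCard_eq_filter]
    refine congrArg card (filter_congr fun s _ => ?_)
    obtain ⟨k, hk⟩ := Nat.not_odd_iff_even.mp hodd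
    omega

variable {α : Type*} [DecidableEq α]

lemma card_filter_powerset_lt_two_mul_card (S : Finset α) :
    #{s ∈ S.powerset | #S < 2 * #s} = #{s ∈ S.powerset | 2 * #s < #S} := by
  have hcompl : ∀ s ∈ S.powerset, S \ s ∈ S.powerset ∧ #(S \ s) + #s = #S := fun s hs =>
    ⟨mem_powerset.mpr sdiff_subset, card_sdiff_add_card_eq_card (mem_powerset.mp hs)⟩
  refine card_bij' (fun s _ => S \ s) (fun s _ => S \ s) (fun s hs => ?_) (fun s hs => ?_)
    (fun s hs => ?_) (fun s hs => ?_)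
  all_goals
    rw [mem_filter] at hs
    obtain ⟨hmem, hcard⟩ := hcompl s hs.1
  · exact mem_filter.mpr ⟨hmem, by omega⟩
  · exact mem_filter.mpr ⟨hmem, by omega⟩
  · exact sdiff_sdiff_eq_self (mem_powerset.mp hs.1)
  · exact sdiff_sdiff_eq_self (mem_powerset.mp hs.1)

lemma two_mul_card_filter_powerset_two_mul_card_lt_add (S : Finset α) :
    2 * #{s ∈ S.powerset | 2 * #s < #S} + #{s ∈ S.powerset | 2 * #s = #S} = 2 ^ #S := by
  have hlt : #{s ∈ S.powerset | 2 * #s < #S} + #{s ∈ S.powerset | ¬ 2 * #s < #S} = 2 ^ #S := by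
    rw [card_filter_add_card_filter_not, card_powerset]
  have hge : #{s ∈ S.powerset | 2 * #s = #S} + #{s ∈ S.powerset | #S < 2 * #s} =
      #{s ∈ S.powerset | ¬ 2 * #s < #S} := by
    rw [← card_filter_add_card_filter_not (s := {s ∈ S.powerset | ¬ 2 * #s < #S})
      (fun s => 2 * #s = #S), filter_filter, filter_filter]
    congr 2 <;> exact filter_congr fun s _ => by omega
  have := card_filter_powerset_lt_two_mul_card S
  omega

end Finset

open Finset.Nat

lemma wt_natCast_of_lt_s4 {n u : ℕ} (hu : u < 2 ^ n - 1) : wt n u = (Nat.digits 2 u).count 1 := by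
  zify [Nat.one_le_two_pow] at hu
  rw [wt, Int.emod_eq_of_lt (by positivity) hu, Int.toNat_natCast]

lemma wt_two_mul_two_pow_add_one_mul {m j : ℕ} (hj : j < 2 ^ m - 1) :
    wt (2 * m) ((2 ^ m + 1) * (j : ℤ)) = 2 * #(equivBitIndices j) := by
  have hlt : j + 2 ^ m * j < 2 ^ (2 * m) - 1 := by
    obtain ⟨k, hk⟩ : ∃ k, 2 ^ m = j + 2 + k := ⟨2 ^ m - (j + 2), by omega⟩
    rw [two_mul, pow_add, hk]
    apply Nat.lt_sub_of_add_lt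
    nlinarith
  have hcast : ((2 : ℤ) ^ m + 1) * j = ((j + 2 ^ m * j : ℕ) : ℤ) := by push_cast; ring
  rw [hcast, wt_natCast_of_lt_s4 hlt, count_one_digits_two_eq_card_equivBitIndices,
    card_equivBitIndices_add_two_pow_mul (by omega), two_mul]

theorem stmt_4 (m : ℕ) (hm : 0 < m) :
    ((Finset.range (2^m - 1)).filter
        (fun j : ℕ => wt (2*m) ((2^m + 1) * (j : ℤ)) < m)).card =
      if Odd m then 2^(m-1) else 2^(m-1) - (m.choose (m/2)) / 2 := by
  have hwt : ∀ j ∈ range (2 ^ m - 1),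
      wt (2 * m) ((2 ^ m + 1) * (j : ℤ)) < m ↔ 2 * #(equivBitIndices j) < m := fun j hj => by
    rw [wt_two_mul_two_pow_add_one_mul (mem_range.mp hj)]
  have hrange : range (2 ^ m) = insert (2 ^ m - 1) (range (2 ^ m - 1)) := by
    rw [← range_add_one, Nat.sub_add_cancel Nat.one_le_two_pow]
  have hcount : #{j ∈ range (2 ^ m - 1) | 2 * #(equivBitIndices j) < m} =
      #{s ∈ (range m).powerset | 2 * #s < m} := by
    rw [← card_filter_range_two_pow, hrange, filter_insert,
      equivBitIndices_two_pow_sub_one, card_range, if_neg (by omega)]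
  have hsym := two_mul_card_filter_powerset_two_mul_card_lt_add (range m)
  rw [card_filter_powerset_two_mul_card_eq, card_range] at hsym
  rw [filter_congr hwt, hcount]
  obtain ⟨k, rfl⟩ : ∃ k, m = k + 1 := ⟨m - 1, by omega⟩
  rw [pow_succ] at hsym
  rw [Nat.add_sub_cancel]
  split_ifs at hsym ⊢ <;> omega
end

section
/- Let n = 2m. The Boolean function F on F_{2^n} with support (Γ × U) ∪ ({1} × Λ), where Γ = {β, β^2, ..., β^{2^{m-1}-1}} for a primitive element β of F_{2^m}, U is the subgroup of F_{2^n}^* of order 2^m + 1, and Λ = {1, ξ, ..., ξ^{2^{m-1}}} for a generator ξ of U, is balanced, i.e., has Hamming weight 2^{n-1}. -/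
/-!
Since `U = ⟨ξ⟩`, every element of the support is `β^i ξ^k` with
`i < 2^m - 1`, `k < 2^m + 1`, and these exponent pairs are distinct because the orders
`2^m - 1` and `2^m + 1` are coprime. So the support has exactly
`(2^(m-1) - 1)(2^m + 1) + 2^(m-1) + 1 = 2^(2m-1)` elements.
-/

open Finset

theorem Nat.coprime_two_pow_sub_one_two_pow_add_one {m : ℕ} (hm : 0 < m) :
    (2 ^ m - 1).Coprime (2 ^ m + 1) := by
  have hsplit : 2 ^ m + 1 = (2 ^ m - 1) + 2 := by have := Nat.one_le_two_pow (n := m); omega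
  rw [hsplit, Nat.coprime_self_add_right, Nat.coprime_two_right]
  exact Nat.Even.sub_odd Nat.one_le_two_pow ((Nat.even_pow' hm.ne').2 even_two) odd_one

section CoprimeOrders

variable {M : Type*} [CommMonoid M]

theorem mul_pow_pow_orderOf_right (x y : M) (a b : ℕ) :
    (x ^ a * y ^ b) ^ orderOf y = x ^ (a * orderOf y) := by
  rw [mul_pow, ← pow_mul, pow_right_comm y, pow_orderOf_eq_one, one_pow, mul_one]

theorem eq_of_pow_mul_eq_pow_mul_of_coprime {x : M} {k a c : ℕ} (hk : (orderOf x).Coprime k)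
    (ha : a < orderOf x) (hc : c < orderOf x) (h : x ^ (a * k) = x ^ (c * k)) : a = c := by
  have hx : IsOfFinOrder x := orderOf_pos_iff.1 (by omega)
  exact ((hx.pow_eq_pow_iff_modEq.1 h).cancel_right_of_coprime hk).eq_of_lt_of_lt ha hc

/-- Raising `x^a y^b` to the power `orderOf y` kills `y`, and `orderOf y` is invertible
modulo `orderOf x`; symmetrically for `b`. -/
theorem pow_mul_pow_injOn_of_coprime {x y : M} (h : (orderOf x).Coprime (orderOf y)) :
    (Set.Iio (orderOf x) ×ˢ Set.Iio (orderOf y)).InjOn fun p : ℕ × ℕ => x ^ p.1 * y ^ p.2 := by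
  rintro ⟨a, b⟩ ⟨ha, hb⟩ ⟨c, d⟩ ⟨hc, hd⟩ hxy
  simp only at ha hb hc hd hxy
  have hac : a = c := eq_of_pow_mul_eq_pow_mul_of_coprime h ha hc <| by
    rw [← mul_pow_pow_orderOf_right x y a b, hxy, mul_pow_pow_orderOf_right]
  have hxy' : y ^ b * x ^ a = y ^ d * x ^ c := by rw [mul_comm, hxy, mul_comm]
  have hbd : b = d := eq_of_pow_mul_eq_pow_mul_of_coprime h.symm hb hd <| by
    rw [← mul_pow_pow_orderOf_right y x b a, hxy', mul_pow_pow_orderOf_right]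
  rw [hac, hbd]

end CoprimeOrders

/-- The exponent pairs `(i, k)` of the elements `β^i ξ^k` of the support. -/
def supportExponents (m : ℕ) : Finset (ℕ × ℕ) :=
  Icc 1 (2 ^ (m - 1) - 1) ×ˢ range (2 ^ m + 1) ∪ {0} ×ˢ Iic (2 ^ (m - 1))

theorem card_supportExponents {m : ℕ} (hm : 0 < m) :
    (supportExponents m).card = 2 ^ (2 * m - 1) := by
  have hdisj : Disjoint (Icc 1 (2 ^ (m - 1) - 1) ×ˢ range (2 ^ m + 1))
      (({0} : Finset ℕ) ×ˢ Iic (2 ^ (m - 1))) :=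
    disjoint_product.2 (Or.inl (by simp))
  rw [supportExponents, card_union_of_disjoint hdisj, card_product, card_product, Nat.card_Icc,
    card_range, Nat.card_Iic, card_singleton]
  have h2m : 2 ^ m = 2 * 2 ^ (m - 1) := (mul_pow_sub_one hm.ne' 2).symm
  have h2m1 : 2 ^ (2 * m - 1) = 2 * (2 ^ (m - 1) * 2 ^ (m - 1)) := by
    rw [show 2 * m - 1 = (m - 1) + (m - 1) + 1 by omega, pow_succ, pow_add]
    ring
  obtain ⟨b, hb⟩ : ∃ b, 2 ^ (m - 1) = b + 1 :=
    Nat.exists_eq_add_one.2 (Nat.two_pow_pos (m - 1))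
  rw [h2m1, h2m, hb, show b + 1 - 1 + 1 - 1 = b by omega]
  ring

theorem supportExponents_subset {m : ℕ} (hm : 0 < m) :
    (supportExponents m : Set (ℕ × ℕ)) ⊆ Set.Iio (2 ^ m - 1) ×ˢ Set.Iio (2 ^ m + 1) := by
  have h2m : 2 ^ m = 2 * 2 ^ (m - 1) := (mul_pow_sub_one hm.ne' 2).symm
  rintro ⟨i, k⟩ hik
  simp only [supportExponents, coe_union, coe_product, coe_Icc, coe_range, coe_singleton,
    coe_Iic, Set.mem_union, Set.mem_prod, Set.mem_Icc, Set.mem_Iio, Set.mem_singleton_iff,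
    Set.mem_Iic] at hik ⊢
  have := Nat.one_le_two_pow (n := m - 1)
  omega

theorem support_eq_image_supportExponents {R : Type*} [CommRing R] [IsDomain R] {m : ℕ}
    {β ξ : R}
    (hξ : IsPrimitiveRoot ξ (2 ^ m + 1)) :
    {x : R | ∃ i : ℕ, 1 ≤ i ∧ i ≤ 2^(m-1) - 1 ∧ ∃ z : R, z^(2^m + 1) = 1 ∧ x = β^i * z}
        ∪ {x : R | ∃ k : ℕ, k ≤ 2^(m-1) ∧ x = ξ^k} =
      (fun p : ℕ × ℕ => β ^ p.1 * ξ ^ p.2) '' supportExponents m := by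
  ext x
  simp only [supportExponents, coe_union, coe_product, coe_Icc, coe_range, coe_singleton,
    coe_Iic, Set.mem_union, Set.mem_ofPred_eq, Set.mem_image, Set.mem_prod, Set.mem_Icc,
    Set.mem_Iio, Set.mem_singleton_iff, Set.mem_Iic, Prod.exists]
  constructor
  · rintro (⟨i, hi1, hi2, z, hz, rfl⟩ | ⟨k, hk, rfl⟩)
    · obtain ⟨k, hk, rfl⟩ := hξ.eq_pow_of_pow_eq_one hz
      exact ⟨i, k, Or.inl ⟨⟨hi1, hi2⟩, hk⟩, rfl⟩
    · exact ⟨0, k, Or.inr ⟨rfl, hk⟩, by rw [pow_zero, one_mul]⟩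
  · rintro ⟨i, k, ⟨⟨hi1, hi2⟩, -⟩ | ⟨rfl, hk⟩, rfl⟩
    · exact Or.inl ⟨i, hi1, hi2, ξ ^ k, by rw [← pow_mul, mul_comm, pow_mul, hξ.pow_eq_one,
        one_pow], rfl⟩
    · exact Or.inr ⟨k, hk, by rw [pow_zero, one_mul]⟩

theorem stmt_14_general (m : ℕ) (hm : 0 < m) (F : Type*) [Field F]
    (β ξ : F) (hβ : orderOf β = 2^m - 1) (hξ : orderOf ξ = 2^m + 1) :
    ({x : F | ∃ i : ℕ, 1 ≤ i ∧ i ≤ 2^(m-1) - 1 ∧ ∃ z : F, z^(2^m + 1) = 1 ∧ x = β^i * z}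
        ∪ {x : F | ∃ k : ℕ, k ≤ 2^(m-1) ∧ x = ξ^k}).ncard = 2^(2*m - 1) := by
  have hcop : (orderOf β).Coprime (orderOf ξ) := by
    rw [hβ, hξ]
    exact Nat.coprime_two_pow_sub_one_two_pow_add_one hm
  have hinj : (supportExponents m : Set (ℕ × ℕ)).InjOn fun p => β ^ p.1 * ξ ^ p.2 :=
    (pow_mul_pow_injOn_of_coprime hcop).mono (hβ ▸ hξ ▸ supportExponents_subset hm)
  rw [support_eq_image_supportExponents (hξ ▸ IsPrimitiveRoot.orderOf ξ), hinj.ncard_image,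
    Set.ncard_coe_finset, card_supportExponents hm]

/-- Let `n = 2m`. The Boolean function on `𝔽_{2^n}` with support
`(Γ × U) ∪ ({1} × Λ)`, where `Γ = {β, β², ..., β^(2^(m-1)-1)}` for a primitive
element `β` of `𝔽_{2^m}`, `U` is the subgroup of `𝔽_{2^n}^*` of order `2^m + 1`
with generator `ξ`, and `Λ = {1, ξ, ..., ξ^(2^(m-1))}`, is balanced: its support
has cardinality `2^(n-1)`. -/
theorem stmt_14 (m : ℕ) (hm : 0 < m) (F : Type*) [Field F] [Fintype F]
    (hF : Fintype.card F = 2^(2*m))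
    (β ξ : F) (hβ : orderOf β = 2^m - 1) (hξ : orderOf ξ = 2^m + 1) :
    ({x : F | ∃ i : ℕ, 1 ≤ i ∧ i ≤ 2^(m-1) - 1 ∧ ∃ z : F, z^(2^m + 1) = 1 ∧ x = β^i * z}
        ∪ {x : F | ∃ k : ℕ, k ≤ 2^(m-1) ∧ x = ξ^k}).ncard = 2^(2*m - 1) :=
  stmt_14_general m hm F β ξ hβ hξ
end

section
/- Let n = 2m and let a ∈ F_{2^m}^* ⊆ F_{2^n}. Let U be the subgroup of F_{2^n}^* of order 2^m + 1. Then the character sum Σ_{z ∈ U} (-1)^{Tr^n_1(az)} equals 1 - K(a), where K(a) = Σ_{x ∈ F_{2^m}} (-1)^{Tr^m_1(1/x + ax)} is the binary Kloosterman sum (with the convention 1/0 = 0). -/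
/-!
The map `z ↦ z + z⁻¹` sends `U` into `𝔽_{2^m}`, and since `z^{2^m} = z⁻¹` on `U`,
`Tr^n_1(a z) = Tr^m_1(a (z + z⁻¹))`. For `c ∈ 𝔽_{2^m}^*` the solutions of `z + z⁻¹ = c` are
`c w` with `w² + w = c⁻²`; they always exist in `F` (Artin–Schreier, as `Tr^n_1(c⁻²) = 0`), and
they lie in `𝔽_{2^m}` or in `U` according as `Tr^m_1(c⁻¹)` is `0` or `1`. Since
`𝔽_{2^m} ∩ U = {1}`, the fibre of `U` over `c ≠ 0` has `1 - (-1)^{Tr^m_1(c⁻¹)}` elements, and the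
fibre over `0` is `{1}`.
Summing over fibres and using `Σ_{c ∈ 𝔽_{2^m}} (-1)^{Tr^m_1(a c)} = 0` gives `1 - K(a)`.
-/

open Finset Polynomial

namespace Kloosterman

section Trace

variable {R : Type*} [CommRing R]

-- On `𝔽_{2^k}` this is the absolute trace `Tr^k_1`.
def tr (k : ℕ) (x : R) : R := ∑ i ∈ range k, x ^ 2 ^ i

theorem tr_add_tr_pow (k : ℕ) (x : R) : tr k x + tr k (x ^ 2 ^ k) = tr (2 * k) x := by
  simp only [tr, two_mul, sum_range_add, ← pow_mul, ← pow_add]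

variable [CharP R 2]

theorem tr_add (k : ℕ) (x y : R) : tr k (x + y) = tr k x + tr k y := by
  simp only [tr, add_pow_char_pow, sum_add_distrib]

theorem sq_tr (k : ℕ) (x : R) : tr k x ^ 2 = tr k (x ^ 2) := by
  simp only [tr, sum_pow_char, ← pow_mul, mul_comm]

theorem tr_sq_add_self (k : ℕ) (x : R) : tr k (x ^ 2 + x) = x ^ 2 ^ k + x := by
  have h := (sum_range_succ' (fun i => x ^ 2 ^ i) k).symm.trans (sum_range_succ _ k)
  have hsq : tr k (x ^ 2) = ∑ i ∈ range k, x ^ 2 ^ (i + 1) := by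
    simp only [tr, pow_succ', pow_mul]
  rw [pow_zero, pow_one] at h
  rw [tr_add, hsq, tr]
  linear_combination h + (∑ i ∈ range k, x ^ 2 ^ i - x) * CharTwo.two_eq_zero (R := R)

end Trace

theorem X_pow_sub_X_dvd {R : Type*} [CommRing R] (p : ℕ) [Fact p.Prime] [CharP R p] (k j : ℕ) :
    (X ^ p ^ k - X : R[X]) ∣ X ^ p ^ (k * j) - X := by
  induction j with
  | zero => simp
  | succ j ih =>
    have h : (X ^ p ^ (k * (j + 1)) - X : R[X])
        = (X ^ p ^ (k * j) - X) ^ p ^ k + (X ^ p ^ k - X) := by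
      rw [sub_pow_char_pow, ← pow_mul, ← pow_add, mul_add, mul_one]
      ring
    rw [h]
    exact dvd_add (dvd_pow ih (pow_ne_zero _ (Fact.out : p.Prime).ne_zero)) dvd_rfl

section Field

variable {F : Type*} [Field F]

theorem add_inv_eq_add_inv_iff {y z : F} (hy : y ≠ 0) (hz : z ≠ 0) :
    y + y⁻¹ = z + z⁻¹ ↔ y = z ∨ y = z⁻¹ := by
  have key : y + y⁻¹ - (z + z⁻¹) = (y - z) * (y - z⁻¹) * y⁻¹ := by
    field_simp
    ring
  rw [← sub_eq_zero, key, mul_eq_zero, mul_eq_zero, sub_eq_zero, sub_eq_zero, inv_eq_zero]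
  tauto

variable [CharP F 2]

theorem tr_eq_zero_or_eq_one {k : ℕ} {x : F} (hx : x ^ 2 ^ k = x) : tr k x = 0 ∨ tr k x = 1 := by
  have h : tr k x * (tr k x - 1) = 0 := by
    have := tr_sq_add_self k x
    rw [hx, CharTwo.add_self_eq_zero, tr_add, ← sq_tr] at this
    linear_combination this - tr k x * CharTwo.two_eq_zero (R := F)
  rcases mul_eq_zero.mp h with h | h
  · exact Or.inl h
  · exact Or.inr (sub_eq_zero.mp h)

theorem tr_sq_of_pow_eq {k : ℕ} {x : F} (hx : x ^ 2 ^ k = x) : tr k (x ^ 2) = tr k x := by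
  have := tr_sq_add_self k x
  rwa [hx, CharTwo.add_self_eq_zero, tr_add, CharTwo.add_eq_zero] at this

theorem tr_two_mul_eq_zero {k : ℕ} {x : F} (hx : x ^ 2 ^ k = x) : tr (2 * k) x = 0 := by
  rw [← tr_add_tr_pow, hx, CharTwo.add_self_eq_zero]

theorem sq_add_self_eq_iff {v w : F} : v ^ 2 + v = w ^ 2 + w ↔ v = w ∨ v = w + 1 := by
  have key : v ^ 2 + v - (w ^ 2 + w) = (v - w) * (v - (w + 1)) := by
    linear_combination (v + v * w - w ^ 2 - w) * CharTwo.two_eq_zero (R := F)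
  rw [← sub_eq_zero, key, mul_eq_zero, sub_eq_zero, sub_eq_zero]

theorem eq_one_of_add_inv_eq_zero {z : F} (hz : z ≠ 0) (h : z + z⁻¹ = 0) : z = 1 := by
  have h1 := mul_inv_cancel₀ hz
  rw [← CharTwo.add_eq_zero.mp h] at h1
  rw [← CharTwo.sq_inj, one_pow, sq, h1]

theorem pow_eq_self_or_eq_inv {k : ℕ} {z : F} (hz : z ≠ 0) (hc : (z + z⁻¹) ^ 2 ^ k = z + z⁻¹) :
    z ^ 2 ^ k = z ∨ z ^ 2 ^ k = z⁻¹ := by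
  rw [add_pow_char_pow, inv_pow] at hc
  exact (add_inv_eq_add_inv_iff (pow_ne_zero _ hz) hz).mp hc

-- `w = z / c` solves `w² + w = c⁻²`, and `tr k (w² + w) = w^{2^k} + w`.
theorem pow_eq_self_iff_tr_inv_eq_zero {k : ℕ} {z c : F} (hz : z ≠ 0) (hzc : z + z⁻¹ = c)
    (hc0 : c ≠ 0) (hc : c ^ 2 ^ k = c) : z ^ 2 ^ k = z ↔ tr k c⁻¹ = 0 := by
  have hci : c⁻¹ ^ 2 ^ k = c⁻¹ := by rw [inv_pow, hc]
  have hw : (z * c⁻¹) ^ 2 + z * c⁻¹ = c⁻¹ ^ 2 := by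
    have hcz : c * z = z ^ 2 + 1 := by rw [← hzc, add_mul, inv_mul_cancel₀ hz, sq]
    linear_combination c⁻¹ ^ 2 * hcz - z * c⁻¹ * mul_inv_cancel₀ hc0
      + c⁻¹ ^ 2 * z ^ 2 * CharTwo.two_eq_zero (R := F)
  have := tr_sq_add_self k (z * c⁻¹)
  rw [hw, tr_sq_of_pow_eq hci, mul_pow, hci, ← add_mul] at this
  rw [this, mul_eq_zero, inv_eq_zero, or_iff_left hc0, CharTwo.add_eq_zero]

end Field

section Sign

variable {F : Type*} [Field F] [DecidableEq F]

def sgn (t : F) : ℤ := if t = 0 then 1 else -1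

variable [CharP F 2] in
theorem sgn_add {s t : F} (hs : s = 0 ∨ s = 1) (ht : t = 0 ∨ t = 1) :
    sgn (s + t) = sgn s * sgn t := by
  rcases hs with rfl | rfl <;> rcases ht with rfl | rfl <;>
    simp [sgn, CharTwo.add_self_eq_zero]

end Sign

section FiniteField

variable {F : Type*} [Field F] [Fintype F] [DecidableEq F]

def fixedPts (k : ℕ) : Finset F := univ.filter fun x => x ^ 2 ^ k = x

theorem mem_fixedPts {k : ℕ} {x : F} : x ∈ fixedPts k ↔ x ^ 2 ^ k = x := by
  simp [fixedPts]

theorem card_tr_eq_zero_le (j : ℕ) : #{x : F | tr (j + 1) x = 0} ≤ 2 ^ j := by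
  have hlow : (∑ i ∈ range j, X ^ 2 ^ i : F[X]).natDegree < 2 ^ j := by
    refine lt_of_le_of_lt (natDegree_sum_le_of_forall_le _ _ (n := 2 ^ j - 1) fun i hi => ?_)
      (Nat.sub_lt (Nat.two_pow_pos j) one_pos)
    rw [natDegree_X_pow]
    exact Nat.le_sub_one_of_lt (Nat.pow_lt_pow_right one_lt_two (mem_range.mp hi))
  have hT : (∑ i ∈ range (j + 1), X ^ 2 ^ i : F[X]).natDegree = 2 ^ j := by
    rw [sum_range_succ, natDegree_add_eq_right_of_natDegree_lt (by rwa [natDegree_X_pow]),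
      natDegree_X_pow]
  have hT0 : (∑ i ∈ range (j + 1), X ^ 2 ^ i : F[X]) ≠ 0 :=
    ne_zero_of_natDegree_gt (hT ▸ Nat.two_pow_pos j)
  refine hT ▸ card_le_degree_of_subset_roots fun x hx => ?_
  rw [mem_roots hT0, IsRoot, eval_finsetSum]
  simpa [tr] using (mem_filter.mp hx).2

def unitCircle (k : ℕ) : Finset F := univ.filter fun z => z ^ (2 ^ k + 1) = 1

theorem mem_unitCircle {k : ℕ} {z : F} : z ∈ unitCircle k ↔ z ≠ 0 ∧ z ^ 2 ^ k = z⁻¹ := by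
  simp only [unitCircle, mem_filter, mem_univ, true_and, pow_succ]
  refine ⟨fun h => ?_, fun ⟨hz, h⟩ => by rw [h, inv_mul_cancel₀ hz]⟩
  have hz : z ≠ 0 := by rintro rfl; simp at h
  exact ⟨hz, eq_inv_of_mul_eq_one_left h⟩

theorem inv_mem_unitCircle {k : ℕ} {z : F} (hz : z ∈ unitCircle k) : z⁻¹ ∈ unitCircle k := by
  rw [mem_unitCircle] at hz ⊢
  exact ⟨inv_ne_zero hz.1, by rw [inv_pow, hz.2]⟩

theorem sum_fixedPts_comp_mul_left {M : Type*} [AddCommMonoid M] {k : ℕ} {a : F} (ha0 : a ≠ 0)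
    (ha : a ^ 2 ^ k = a) (g : F → M) :
    ∑ x ∈ (fixedPts k : Finset F), g (a * x) = ∑ x ∈ fixedPts k, g x := by
  refine sum_nbij' (a * ·) (a⁻¹ * ·) ?_ ?_ ?_ ?_ ?_ <;> intro x hx
  all_goals simp_all [mem_fixedPts, mul_pow, inv_pow]

variable [CharP F 2]

-- `X^{2^k} - X` divides `X^{|F|} - X`, which splits with simple roots in `F`.
theorem card_fixedPts {n k : ℕ} (hF : Fintype.card F = 2 ^ n) (hkn : k ∣ n) :
    #(fixedPts k : Finset F) = 2 ^ k := by
  obtain ⟨j, rfl⟩ := hkn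
  have hP : (X ^ 2 ^ (k * j) - X : F[X]).roots = univ.val :=
    hF ▸ FiniteField.roots_X_pow_card_sub_X F
  have hP0 : (X ^ 2 ^ (k * j) - X : F[X]) ≠ 0 :=
    hF ▸ FiniteField.X_pow_card_sub_X_ne_zero F Fintype.one_lt_card
  have hPs : (X ^ 2 ^ (k * j) - X : F[X]).Splits := by
    rw [splits_iff_card_roots, hP, ← hF,
      FiniteField.X_pow_card_sub_X_natDegree_eq F Fintype.one_lt_card]
    rfl
  have hdvd := X_pow_sub_X_dvd (R := F) 2 k j
  have hf0 : (X ^ 2 ^ k - X : F[X]) ≠ 0 := ne_zero_of_dvd_ne_zero hP0 hdvd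
  have hnodup := Multiset.nodup_of_le (roots.le_of_dvd hP0 hdvd) (hP ▸ univ.nodup)
  have hS : fixedPts k = (X ^ 2 ^ k - X : F[X]).roots.toFinset := by
    ext x
    simp [mem_fixedPts, mem_roots hf0, sub_eq_zero]
  rcases Nat.eq_zero_or_pos k with rfl | hk
  · simp at hf0
  rw [hS, Multiset.toFinset_card_of_nodup hnodup,
    splits_iff_card_roots.mp (hPs.of_dvd hP0 hdvd),
    FiniteField.X_pow_card_sub_X_natDegree_eq F (Nat.one_lt_two_pow hk.ne')]

-- `w ↦ w² + w` is two-to-one into the kernel of `tr n`, which has at most `2^{n-1}` elements.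
theorem exists_sq_add_self_eq {n : ℕ} (hF : Fintype.card F = 2 ^ n) {b : F} (hb : tr n b = 0) :
    ∃ w, w ^ 2 + w = b := by
  obtain ⟨j, rfl⟩ : ∃ j, n = j + 1 := Nat.exists_eq_succ_of_ne_zero <| by
    rintro rfl
    simpa [hF] using Fintype.one_lt_card (α := F)
  set f : F → F := fun w => w ^ 2 + w
  have hfib : ∀ b ∈ univ.image f, #{w | f w = b} = 2 := by
    intro b hb
    obtain ⟨w, -, rfl⟩ := mem_image.mp hb
    have : ({v | f v = f w} : Finset F) = {w, w + 1} := by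
      ext v
      simp [f, sq_add_self_eq_iff]
    rw [this, card_pair (by simp)]
  have himage : #(univ.image f) = 2 ^ j := by
    have := card_eq_sum_card_image f univ
    rw [sum_congr rfl hfib, sum_const, card_univ, hF, pow_succ, smul_eq_mul] at this
    omega
  have hsub : univ.image f ⊆ ({x | tr (j + 1) x = 0} : Finset F) := by
    intro x hx
    obtain ⟨w, -, rfl⟩ := mem_image.mp hx
    simp [f, tr_sq_add_self, ← hF, FiniteField.pow_card, CharTwo.add_self_eq_zero]
  have heq := eq_of_subset_of_card_le hsub (himage ▸ card_tr_eq_zero_le j)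
  have hb' : b ∈ univ.image f := heq ▸ mem_filter.mpr ⟨mem_univ b, hb⟩
  simpa [f] using hb'

theorem sum_sgn_tr_eq_zero {k : ℕ} (hk : 0 < k) (hcard : #(fixedPts k : Finset F) = 2 ^ k) :
    ∑ x ∈ (fixedPts k : Finset F), sgn (tr k x) = 0 := by
  obtain ⟨x₀, hx₀, htr₀⟩ : ∃ x₀ ∈ (fixedPts k : Finset F), tr k x₀ ≠ 0 := by
    by_contra! h
    obtain ⟨j, rfl⟩ := Nat.exists_eq_succ_of_ne_zero hk.ne'
    have hle := (card_le_card fun x hx => mem_filter.mpr ⟨mem_univ x, h x hx⟩).trans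
      (card_tr_eq_zero_le j)
    rw [hcard, pow_succ] at hle
    linarith [Nat.two_pow_pos j]
  have htr₀ : tr k x₀ = 1 := (tr_eq_zero_or_eq_one (mem_fixedPts.mp hx₀)).resolve_left htr₀
  have hshift : ∑ x ∈ (fixedPts k : Finset F), sgn (tr k x)
      = ∑ x ∈ (fixedPts k : Finset F), sgn (tr k (x + x₀)) := by
    refine sum_nbij' (· + x₀) (· + x₀) ?_ ?_ ?_ ?_ ?_ <;> intro x hx
    all_goals simp_all [mem_fixedPts, add_pow_char_pow, CharTwo.add_cancel_right]
  have hflip : ∀ x ∈ (fixedPts k : Finset F), sgn (tr k (x + x₀)) = -sgn (tr k x) := by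
    intro x hx
    rw [tr_add, sgn_add (tr_eq_zero_or_eq_one (mem_fixedPts.mp hx)) (.inr htr₀), htr₀]
    simp [sgn]
  rw [sum_congr rfl hflip, sum_neg_distrib] at hshift
  linarith

theorem exists_add_inv_eq {n : ℕ} (hF : Fintype.card F = 2 ^ n) {c : F} (hc0 : c ≠ 0)
    (hc : tr n c⁻¹ = 0) : ∃ z, z + z⁻¹ = c := by
  have hci : c⁻¹ ^ 2 ^ n = c⁻¹ := hF ▸ FiniteField.pow_card c⁻¹
  obtain ⟨w, hw⟩ := exists_sq_add_self_eq hF (b := c⁻¹ ^ 2) (by rwa [tr_sq_of_pow_eq hci])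
  refine ⟨c * w, ?_⟩
  have hinv : (c * w)⁻¹ = c * w + c := inv_eq_of_mul_eq_one_right <| by
    linear_combination c ^ 2 * hw + (c * c⁻¹ + 1) * mul_inv_cancel₀ hc0
  rw [hinv]
  linear_combination c * w * CharTwo.two_eq_zero (R := F)

theorem add_inv_mem_fixedPts {k : ℕ} {z : F} (hz : z ∈ unitCircle k) :
    z + z⁻¹ ∈ fixedPts k := by
  rw [mem_unitCircle] at hz
  rw [mem_fixedPts, add_pow_char_pow, inv_pow, hz.2, inv_inv, add_comm]

theorem tr_two_mul_mul_of_mem_unitCircle {k : ℕ} {a z : F} (ha : a ^ 2 ^ k = a)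
    (hz : z ∈ unitCircle k) : tr (2 * k) (a * z) = tr k (a * (z + z⁻¹)) := by
  rw [← tr_add_tr_pow, mul_pow, ha, (mem_unitCircle.mp hz).2, ← tr_add, mul_add]

theorem filter_unitCircle_add_inv_eq_zero (k : ℕ) :
    {z ∈ (unitCircle k : Finset F) | z + z⁻¹ = 0} = {1} := by
  ext z
  simp only [mem_filter, mem_unitCircle, mem_singleton]
  refine ⟨fun ⟨⟨hz, _⟩, h⟩ => eq_one_of_add_inv_eq_zero hz h, ?_⟩
  rintro rfl
  simp [CharTwo.add_self_eq_zero]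

theorem card_filter_unitCircle_add_inv_eq {m : ℕ} (hF : Fintype.card F = 2 ^ (2 * m)) {c : F}
    (hc0 : c ≠ 0) (hc : c ∈ fixedPts m) :
    (#{z ∈ (unitCircle m : Finset F) | z + z⁻¹ = c} : ℤ) = 1 - sgn (tr m c⁻¹) := by
  rw [mem_fixedPts] at hc
  have hz0 : ∀ {z : F}, z + z⁻¹ = c → z ≠ 0 := by rintro z hzc rfl; simp [← hzc] at hc0
  by_cases htr : tr m c⁻¹ = 0
  · suffices {z ∈ (unitCircle m : Finset F) | z + z⁻¹ = c} = ∅ by simp [this, sgn, htr]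
    refine filter_eq_empty_iff.mpr fun z hz hzc => hc0 ?_
    have hfix := (pow_eq_self_iff_tr_inv_eq_zero (hz0 hzc) hzc hc0 hc).mpr htr
    rw [← hzc, ← (mem_unitCircle.mp hz).2, hfix, CharTwo.add_self_eq_zero]
  obtain ⟨z₀, hz₀c⟩ := exists_add_inv_eq hF hc0 (tr_two_mul_eq_zero (by rw [inv_pow, hc]))
  have hz₀ := hz0 hz₀c
  have hz₀U : z₀ ∈ unitCircle m := mem_unitCircle.mpr ⟨hz₀,
    (pow_eq_self_or_eq_inv hz₀ (hz₀c ▸ hc)).resolve_left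
      (mt (pow_eq_self_iff_tr_inv_eq_zero hz₀ hz₀c hc0 hc).mp htr)⟩
  have hfiber : {z ∈ (unitCircle m : Finset F) | z + z⁻¹ = c} = {z₀, z₀⁻¹} := by
    ext z
    simp only [mem_filter, mem_insert, mem_singleton]
    constructor
    · rintro ⟨-, hzc⟩
      exact (add_inv_eq_add_inv_iff (hz0 hzc) hz₀).mp (hzc.trans hz₀c.symm)
    · rintro (rfl | rfl)
      · exact ⟨hz₀U, hz₀c⟩
      · exact ⟨inv_mem_unitCircle hz₀U, by rw [inv_inv, add_comm, hz₀c]⟩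
  have hne : z₀ ≠ z₀⁻¹ := fun h => hc0 (by rw [← hz₀c, ← h, CharTwo.add_self_eq_zero])
  rw [hfiber, card_pair hne, sgn, if_neg htr]
  norm_num

end FiniteField

end Kloosterman

open Kloosterman

/-- Lemma (Mesnager): let `n = 2m`, `F = 𝔽_{2^n}` with subfield `𝔽_{2^m} = {x : x^(2^m) = x}`,
and `U = {z : z^(2^m+1) = 1}` the subgroup of `F^*` of order `2^m + 1`. For
`a ∈ 𝔽_{2^m}^*`, the character sum `Σ_{z ∈ U} (-1)^{Tr^n_1(a z)}` equals `1 - K(a)`,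
where `K(a) = Σ_{x ∈ 𝔽_{2^m}} (-1)^{Tr^m_1(1/x + a x)}` is the binary Kloosterman sum
(with `1/0 = 0`).  Here `Tr^n_1(y) = Σ_{i<n} y^(2^i)` is the absolute trace (an element
of `{0,1} ⊆ F`), and `(-1)^t` is encoded as `if t = 0 then 1 else -1` in `ℤ`. -/
theorem stmt_16 (m : ℕ) (hm : 0 < m) (F : Type*) [Field F] [Fintype F] [DecidableEq F]
    (hF : Fintype.card F = 2^(2*m))
    (a : F) (ha : a ≠ 0) (haK : a^(2^m) = a) :
    (∑ z ∈ Finset.univ.filter (fun z : F => z^(2^m + 1) = 1),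
        (if (∑ i ∈ Finset.range (2*m), (a * z)^(2^i)) = 0 then (1:ℤ) else -1)) =
      1 - ∑ x ∈ Finset.univ.filter (fun x : F => x^(2^m) = x),
        (if (∑ i ∈ Finset.range m, (x⁻¹ + a * x)^(2^i)) = 0 then (1:ℤ) else -1) := by
  have : CharP F 2 := charP_of_card_eq_prime_pow hF
  change ∑ z ∈ unitCircle m, sgn (tr (2 * m) (a * z))
    = 1 - ∑ x ∈ fixedPts m, sgn (tr m (x⁻¹ + a * x))
  have hfiber : ∀ c ∈ (fixedPts m : Finset F),
      #{z ∈ unitCircle m | z + z⁻¹ = c} • sgn (tr m (a * c))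
        = sgn (tr m (a * c)) - sgn (tr m (c⁻¹ + a * c)) + if c = 0 then 1 else 0 := by
    intro c hc
    rcases eq_or_ne c 0 with rfl | hc0
    · simp [filter_unitCircle_add_inv_eq_zero, sgn, tr]
    have hcm := mem_fixedPts.mp hc
    rw [nsmul_eq_mul, card_filter_unitCircle_add_inv_eq hF hc0 hc, tr_add,
      sgn_add (tr_eq_zero_or_eq_one (by rw [inv_pow, hcm]))
        (tr_eq_zero_or_eq_one (by rw [mul_pow, haK, hcm])), if_neg hc0]
    ring
  have hbalance : ∑ c ∈ (fixedPts m : Finset F), sgn (tr m (a * c)) = 0 := by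
    rw [sum_fixedPts_comp_mul_left ha haK (fun x => sgn (tr m x))]
    exact sum_sgn_tr_eq_zero hm (card_fixedPts hF (dvd_mul_left m 2))
  calc ∑ z ∈ unitCircle m, sgn (tr (2 * m) (a * z))
      = ∑ z ∈ unitCircle m, sgn (tr m (a * (z + z⁻¹))) :=
        sum_congr rfl fun z hz => by rw [tr_two_mul_mul_of_mem_unitCircle haK hz]
    _ = ∑ c ∈ fixedPts m, #{z ∈ unitCircle m | z + z⁻¹ = c} • sgn (tr m (a * c)) := by
        simp_rw [← sum_const, sum_fiberwise_of_maps_to' fun z => add_inv_mem_fixedPts]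
    _ = 1 - ∑ x ∈ fixedPts m, sgn (tr m (x⁻¹ + a * x)) := by
        rw [sum_congr rfl hfiber, sum_add_distrib, sum_sub_distrib, hbalance, sum_ite_eq',
          if_pos (mem_fixedPts.mpr (by simp))]
        ring
end
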